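/- Let x ∈ [1,3]⁶ satisfy x₁ = 3 (so x₁ is the maximum of the coordinates). Then φ(x) ≤ 4/5; consequently the extended dihedral angle α₁ = arccos(max(−1, min(1, φ(x)))) satisfies α₁ > π/5. -/
import Mathlib


open Real

/-- The cosine of the dihedral angle at the edge `e₁` of a generalized hyper-ideal
tetrahedron whose edge lengths `lᵢ` satisfy `cosh lᵢ = xᵢ`. -/
noncomputable def phi (x1 x2 x3 x4 x5 x6 : ℝ) : ℝ :=
  (x2 * x3 + x5 * x6 + x1 * x2 * x5 + x1 * x3 * x6 - x1 ^ 2 * x4 + x4) /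
    (Real.sqrt (2 * x1 * x2 * x6 + x1 ^ 2 + x2 ^ 2 + x6 ^ 2 - 1) *
      Real.sqrt (2 * x1 * x3 * x5 + x1 ^ 2 + x3 ^ 2 + x5 ^ 2 - 1))

lemma key_ineq (a b c d : ℝ) (ha : 1 ≤ a) (hb : 1 ≤ b) (hc : 1 ≤ c) (hd : 1 ≤ d)
    (ha' : a ≤ 3) (hb' : b ≤ 3) (hc' : c ≤ 3) (hd' : d ≤ 3) :
    25 * (a*c + b*d + 3*a*d + 3*b*c - 8)^2 ≤
      16 * ((6*a*b + a^2 + b^2 + 8) * (6*c*d + c^2 + d^2 + 8)) := by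
  have ha3 : (0:ℝ) ≤ 3 - a := by linarith
  have hb3 : (0:ℝ) ≤ 3 - b := by linarith
  have hc3 : (0:ℝ) ≤ 3 - c := by linarith
  have hd3 : (0:ℝ) ≤ 3 - d := by linarith
  have ha1 : (0:ℝ) ≤ a - 1 := by linarith
  have hb1 : (0:ℝ) ≤ b - 1 := by linarith
  have hc1 : (0:ℝ) ≤ c - 1 := by linarith
  have hd1 : (0:ℝ) ≤ d - 1 := by linarith
  linarith [mul_nonneg (ha3) ha1,
    mul_nonneg (hb3) hb1,
    mul_nonneg (hb3) hc1,
    mul_nonneg (hc3) hd3,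
    mul_nonneg (hd3) ha1,
    mul_nonneg (hd3) hb1,
    mul_nonneg (hd3) hd1,
    mul_nonneg (mul_nonneg (ha3) hb3) hc1,
    mul_nonneg (mul_nonneg (ha3) hb3) hd1,
    mul_nonneg (mul_nonneg (ha3) hc3) hd3,
    mul_nonneg (mul_nonneg (ha3) ha1) hc1,
    mul_nonneg (mul_nonneg (ha3) ha1) hd1,
    mul_nonneg (mul_nonneg (ha3) hc1) hd1,
    mul_nonneg (mul_nonneg (ha3) hd1) hd1,
    mul_nonneg (mul_nonneg (hb3) hd3) hd3,
    mul_nonneg (mul_nonneg (hb3) hb1) hc1,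
    mul_nonneg (mul_nonneg (hb3) hb1) hd1,
    mul_nonneg (mul_nonneg (hb3) hc1) hc1,
    mul_nonneg (mul_nonneg (hb3) hc1) hd1,
    mul_nonneg (mul_nonneg (hb3) hd1) hd1,
    mul_nonneg (mul_nonneg (hc3) hd3) hb1,
    mul_nonneg (mul_nonneg (hc3) ha1) hb1,
    mul_nonneg (mul_nonneg (hc3) ha1) hc1,
    mul_nonneg (mul_nonneg (hc3) hb1) hb1,
    mul_nonneg (mul_nonneg (hc3) hb1) hc1,
    mul_nonneg (mul_nonneg (hd3) ha1) hd1,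
    mul_nonneg (mul_nonneg (mul_nonneg (ha3) ha3) hc3) hc1,
    mul_nonneg (mul_nonneg (mul_nonneg (ha3) ha3) hc3) hd1,
    mul_nonneg (mul_nonneg (mul_nonneg (ha3) ha3) hd3) hd1,
    mul_nonneg (mul_nonneg (mul_nonneg (ha3) hb3) hc3) hd3,
    mul_nonneg (mul_nonneg (mul_nonneg (ha3) hb3) hc3) hc1,
    mul_nonneg (mul_nonneg (mul_nonneg (ha3) hb3) hd3) hd1,
    mul_nonneg (mul_nonneg (mul_nonneg (hb3) hb3) hc3) hc1,
    mul_nonneg (mul_nonneg (mul_nonneg (hb3) hb3) hc3) hd1,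
    mul_nonneg (mul_nonneg (mul_nonneg (hb3) hb3) hd3) hd1]

lemma le_four_fifths_of_sq (m s : ℝ) (hs : 0 ≤ s) (h : 25 * m ^ 2 ≤ 16 * s ^ 2) :
    m ≤ 4 / 5 * s := by
  nlinarith [h, hs, sq_nonneg (5 * m - 4 * s), sq_nonneg (5 * m + 4 * s)]

set_option maxHeartbeats 800000 in
theorem phi_le_four_fifths_of_max_three (x1 x2 x3 x4 x5 x6 : ℝ)
    (h1 : 1 ≤ x1) (h2 : 1 ≤ x2) (h3 : 1 ≤ x3) (h4 : 1 ≤ x4) (h5 : 1 ≤ x5) (h6 : 1 ≤ x6)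
    (h1' : x1 ≤ 3) (h2' : x2 ≤ 3) (h3' : x3 ≤ 3) (h4' : x4 ≤ 3) (h5' : x5 ≤ 3) (h6' : x6 ≤ 3)
    (hx1 : x1 = 3) :
    phi x1 x2 x3 x4 x5 x6 ≤ 4 / 5 ∧
      Real.pi / 5 < Real.arccos (max (-1) (min 1 (phi x1 x2 x3 x4 x5 x6))) := by
  subst hx1
  have hphi : phi 3 x2 x3 x4 x5 x6 ≤ 4 / 5 := by
    unfold phi
    set A : ℝ := 2 * 3 * x2 * x6 + 3 ^ 2 + x2 ^ 2 + x6 ^ 2 - 1 with hA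
    set B : ℝ := 2 * 3 * x3 * x5 + 3 ^ 2 + x3 ^ 2 + x5 ^ 2 - 1 with hB
    have hA16 : (16:ℝ) ≤ A := by nlinarith
    have hB16 : (16:ℝ) ≤ B := by nlinarith
    have hA0 : (0:ℝ) ≤ A := by linarith
    have hB0 : (0:ℝ) ≤ B := by linarith
    have hsA : 0 < Real.sqrt A := Real.sqrt_pos.2 (by linarith)
    have hsB : 0 < Real.sqrt B := Real.sqrt_pos.2 (by linarith)
    rw [div_le_iff₀ (mul_pos hsA hsB)]
    have hsq : Real.sqrt A * Real.sqrt B = Real.sqrt (A * B) := (Real.sqrt_mul hA0 B).symm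
    rw [hsq]
    have hs0 : 0 ≤ Real.sqrt (A * B) := Real.sqrt_nonneg _
    have hs2 : Real.sqrt (A * B) ^ 2 = A * B := Real.sq_sqrt (mul_nonneg hA0 hB0)
    have key := key_ineq x2 x6 x3 x5 h2 h6 h3 h5 h2' h6' h3' h5'
    have hAB : A * B = (6*x2*x6 + x2^2 + x6^2 + 8) * (6*x3*x5 + x3^2 + x5^2 + 8) := by
      rw [hA, hB]; ring
    have hM : x2 * x3 + x5 * x6 + 3 * x2 * x5 + 3 * x3 * x6 - 3 ^ 2 * x4 + x4 ≤
        x2*x3 + x6*x5 + 3*x2*x5 + 3*x6*x3 - 8 := by linarith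
    have hkey2 : 25 * (x2*x3 + x6*x5 + 3*x2*x5 + 3*x6*x3 - 8) ^ 2
        ≤ 16 * Real.sqrt (A * B) ^ 2 := by rw [hs2, hAB]; exact key
    have hfin := le_four_fifths_of_sq _ _ hs0 hkey2
    linarith
  refine ⟨hphi, ?_⟩
  set c : ℝ := max (-1) (min 1 (phi 3 x2 x3 x4 x5 x6)) with hc
  have hc1 : -1 ≤ c := le_max_left _ _
  have hc2 : c ≤ 1 := max_le (by norm_num) (min_le_left _ _)
  have hc45 : c ≤ 4 / 5 := max_le (by norm_num) (le_trans (min_le_right _ _) hphi)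
  by_contra hcon
  push_neg at hcon
  have hpi : Real.pi / 5 ≤ Real.pi := by linarith [Real.pi_pos]
  have hle := Real.cos_le_cos_of_nonneg_of_le_pi (Real.arccos_nonneg c) hpi hcon
  rw [Real.cos_arccos hc1 hc2, Real.cos_pi_div_five] at hle
  have h5' : Real.sqrt 5 ^ 2 = 5 := Real.sq_sqrt (by norm_num)
  nlinarith [Real.sqrt_nonneg 5]
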